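/- Let a ≥ 1 and b ≥ 1 be integers. For Lebesgue-almost every x ∈ Λ^{a+b} and every i with 1 ≤ i ≤ a+1, the coordinate (T_{a,b}^k(x))_i tends to 0 as k → ∞ (the coordinatewise limit of T_{a,b}^k(x) always exists, since every coordinate sequence is nonnegative and nonincreasing). -/

import Mathlib

open MeasureTheory Filter Topology

/-- `Λⁿ`: points of `ℝⁿ` with nonnegative, nondecreasing coordinates. -/
def Lambda (n : ℕ) : Set (Fin n → ℝ) := {x | (∀ i, 0 ≤ x i) ∧ Monotone x}

/-- The vector `(x₁,…,x_a, x_{a+1}-x_a,…,x_{a+b}-x_a)` (0-based indexing). -/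
noncomputable def subVec (a b : ℕ) (x : Fin (a + b) → ℝ) : Fin (a + b) → ℝ :=
  fun j => if (j : ℕ) < a then x j else x j - x ⟨a - 1, by have := j.isLt; omega⟩

/-- The map `T_{a,b}`: nondecreasing rearrangement of `subVec a b x`. -/
noncomputable def Tab (a b : ℕ) (x : Fin (a + b) → ℝ) : Fin (a + b) → ℝ :=
  subVec a b x ∘ Tuple.sort (subVec a b x)

/-!
Along an orbit every coordinate is nonincreasing, and since sorting preserves the sum, the total
sum drops by `b * x_a` at each step; hence `x_a → 0`, and with it `x_1, …, x_a`. If `x_{a+1}`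
stayed above some `c > 0`, then once `x_a < c / 2` every difference `x_j - x_a` (`j > a`) exceeds
`x_a`, so `T` never changes `x_a` again and it would have to vanish. That cannot happen for almost
every `x`: each iterate is `M x` for an integer matrix `M` of nonzero determinant (a product of
unipotent and permutation matrices), so a vanishing coordinate is a nontrivial integer relation
among the `x_j`.
-/

open Finset Matrix

theorem ae_forall_intCast_dotProduct_ne_zero (ι : Type*) [Fintype ι] [DecidableEq ι] :
    ∀ᵐ x : ι → ℝ, ∀ c : ι → ℤ, c ≠ 0 → (Int.cast ∘ c : ι → ℝ) ⬝ᵥ x ≠ 0 := by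
  refine ae_all_iff.2 fun c => ?_
  by_cases hc : c = 0
  · exact Eventually.of_forall fun _ h => absurd hc h
  have hl : LinearMap.ker (dotProductEquiv ℝ ι (Int.cast ∘ c)) ≠ ⊤ := by
    rw [Ne, LinearMap.ker_eq_top, LinearEquiv.map_eq_zero_iff]
    exact fun h => hc (funext fun i => by simpa using congrFun h i)
  exact measure_mono_null (fun x hx => not_not.1 fun h => hx fun _ => h)
    (Measure.addHaar_submodule volume _ hl)

theorem ae_forall_intMatrix_mulVec_ne_zero (ι : Type*) [Fintype ι] [DecidableEq ι] :
    ∀ᵐ x : ι → ℝ, ∀ M : Matrix ι ι ℤ, M.det ≠ 0 → ∀ i, (M.map (Int.cast : ℤ → ℝ) *ᵥ x) i ≠ 0 := by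
  filter_upwards [ae_forall_intCast_dotProduct_ne_zero ι] with x hx M hM i
  exact hx (M i) fun h => hM (Matrix.det_eq_zero_of_row_eq_zero i fun j => congrFun h j)

theorem Finset.card_filter_comp_perm {ι : Type*} [Fintype ι] (σ : Equiv.Perm ι) (p : ι → Prop)
    [DecidablePred p] : #{i | p (σ i)} = #{i | p i} :=
  card_equiv σ (by simp)

theorem tendsto_zero_of_add_le {f S : ℕ → ℝ} (hf : ∀ k, 0 ≤ f k) (hS : ∀ k, 0 ≤ S k)
    (h : ∀ k, S (k + 1) + f k ≤ S k) : Tendsto f atTop (𝓝 0) := by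
  refine (summable_of_sum_range_le (c := S 0) hf fun n => ?_).tendsto_atTop_zero
  calc ∑ k ∈ range n, f k ≤ ∑ k ∈ range n, (S k - S (k + 1)) :=
        sum_le_sum fun k _ => by linarith [h k]
    _ = S 0 - S n := sum_range_sub' S n
    _ ≤ S 0 := by linarith [hS n]

namespace Tuple

variable {α : Type*} [LinearOrder α] {n : ℕ}

theorem apply_sort_le_iff (u : Fin n → α) (j : Fin n) (t : α) :
    u (sort u j) ≤ t ↔ j < #{i | u i ≤ t} := by
  rw [← card_filter_comp_perm (sort u) (u · ≤ t)]
  exact (lt_card_le_iff_apply_le_of_monotone (monotone_sort u)).symm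

theorem apply_sort_lt_iff (u : Fin n → α) (j : Fin n) (t : α) :
    u (sort u j) < t ↔ j < #{i | u i < t} := by
  rw [← card_filter_comp_perm (sort u) (u · < t)]
  exact (lt_card_lt_iff_apply_lt_of_monotone (monotone_sort u)).symm

theorem comp_sort_le_of_le {u v : Fin n → α} (huv : u ≤ v) (hv : Monotone v) : u ∘ sort u ≤ v :=
  fun j => (apply_sort_le_iff u j (v j)).2 <|
    ((lt_card_le_iff_apply_le_of_monotone hv).2 le_rfl).trans_le <|
      card_le_card fun i => by simpa using (huv i).trans

end Tuple

section Tab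

variable {a b : ℕ}

-- `x_a` in the 1-based indexing of the paper.
def pivot (ha : 1 ≤ a) : Fin (a + b) := ⟨a - 1, by omega⟩

theorem subVec_apply_of_lt {x : Fin (a + b) → ℝ} {j : Fin (a + b)} (hj : (j : ℕ) < a) :
    subVec a b x j = x j :=
  if_pos hj

theorem subVec_apply_of_le (ha : 1 ≤ a) {x : Fin (a + b) → ℝ} {j : Fin (a + b)}
    (hj : a ≤ (j : ℕ)) : subVec a b x j = x j - x (pivot ha) :=
  if_neg (by omega)

theorem subVec_le {x : Fin (a + b) → ℝ} (hx : ∀ i, 0 ≤ x i) : subVec a b x ≤ x := by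
  intro j
  unfold subVec
  split_ifs
  exacts [le_rfl, sub_le_self _ (hx _)]

theorem subVec_nonneg {x : Fin (a + b) → ℝ} (hx : x ∈ Lambda (a + b)) : 0 ≤ subVec a b x := by
  intro j
  unfold subVec
  split_ifs with hj
  exacts [hx.1 j, sub_nonneg.2 (hx.2 (Fin.le_iff_val_le_val.2 (by simp; omega)))]

theorem Tab_mem_Lambda {x : Fin (a + b) → ℝ} (hx : x ∈ Lambda (a + b)) :
    Tab a b x ∈ Lambda (a + b) :=
  ⟨fun _ => subVec_nonneg hx _, Tuple.monotone_sort _⟩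

theorem Tab_le {x : Fin (a + b) → ℝ} (hx : x ∈ Lambda (a + b)) : Tab a b x ≤ x :=
  Tuple.comp_sort_le_of_le (subVec_le hx.1) hx.2

theorem sum_Tab (ha : 1 ≤ a) (x : Fin (a + b) → ℝ) :
    ∑ i, Tab a b x i = ∑ i, x i - b * x (pivot ha) := by
  rw [Tab]
  simp only [Function.comp_apply]
  rw [Equiv.sum_comp (Tuple.sort _) (subVec a b x), Fin.sum_univ_add, Fin.sum_univ_add x]
  simp [subVec_apply_of_lt, subVec_apply_of_le ha, sum_sub_distrib]
  ring

theorem Tab_apply_pivot (ha : 1 ≤ a) {x : Fin (a + b) → ℝ} (hx : x ∈ Lambda (a + b))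
    {j : Fin (a + b)} (hj : (j : ℕ) = a) (h : 2 * x (pivot ha) ≤ x j) :
    Tab a b x (pivot ha) = x (pivot ha) := by
  refine le_antisymm (Tab_le hx _) (not_lt.1 fun hlt => ?_)
  rw [Tab, Function.comp_apply, Tuple.apply_sort_lt_iff] at hlt
  have hsub : ({i | subVec a b x i < x (pivot ha)} : Finset _) ⊆ Iio (pivot ha) := by
    intro i hi
    rw [mem_filter] at hi
    rw [mem_Iio, Fin.lt_def]
    by_contra hge
    simp only [pivot, not_lt] at hge
    rcases lt_or_ge (i : ℕ) a with hia | hia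
    · rw [subVec_apply_of_lt hia, (Fin.ext (by simp [pivot]; omega) : i = pivot ha)] at hi
      exact lt_irrefl _ hi.2
    · rw [subVec_apply_of_le ha hia] at hi
      have := hx.2 (Fin.le_iff_val_le_val.2 (by omega : (j : ℕ) ≤ i))
      linarith [hi.2]
  have := card_le_card hsub
  simp only [Fin.card_Iio, pivot] at this hlt
  omega

def subVecMatrix (R : Type*) [Ring R] (ha : 1 ≤ a) : Matrix (Fin (a + b)) (Fin (a + b)) R :=
  1 - of fun i j : Fin (a + b) => if a ≤ (i : ℕ) ∧ j = pivot ha then 1 else 0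

theorem subVec_eq_mulVec (ha : 1 ≤ a) (x : Fin (a + b) → ℝ) :
    subVec a b x = subVecMatrix ℝ ha *ᵥ x := by
  ext j
  rw [subVecMatrix, sub_mulVec, one_mulVec, Pi.sub_apply]
  by_cases hj : a ≤ (j : ℕ)
  · simp [hj, subVec_apply_of_le ha hj, mulVec, dotProduct]
  · simp [hj, subVec_apply_of_lt (not_le.1 hj), mulVec, dotProduct]

theorem subVecMatrix_map_intCast (R : Type*) [Ring R] (ha : 1 ≤ a) :
    (subVecMatrix ℤ ha).map (Int.cast : ℤ → R) = subVecMatrix (b := b) R ha := by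
  ext i j
  simp only [subVecMatrix, map_apply, Matrix.sub_apply, one_apply, of_apply]
  split_ifs <;> simp

theorem det_subVecMatrix (ha : 1 ≤ a) : (subVecMatrix (b := b) ℤ ha).det = 1 := by
  rw [det_of_isLowerTriangular]
  · refine prod_eq_one fun i _ => ?_
    simp only [subVecMatrix, pivot, Fin.ext_iff, Matrix.sub_apply, one_apply, of_apply]
    rw [if_pos trivial, if_neg (by omega), sub_zero]
  · intro i j hij
    rw [OrderDual.toDual_lt_toDual, Fin.lt_def] at hij
    simp only [subVecMatrix, pivot, Fin.ext_iff, Matrix.sub_apply, one_apply, of_apply]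
    rw [if_neg hij.ne, if_neg (by omega), sub_zero]

theorem exists_intMatrix_Tab_iterate_eq_mulVec (ha : 1 ≤ a) (x : Fin (a + b) → ℝ) (k : ℕ) :
    ∃ M : Matrix (Fin (a + b)) (Fin (a + b)) ℤ,
      M.det ≠ 0 ∧ (Tab a b)^[k] x = M.map (Int.cast : ℤ → ℝ) *ᵥ x := by
  induction k with
  | zero => exact ⟨1, by simp, by simp⟩
  | succ k ih =>
    obtain ⟨M, hM, hk⟩ := ih
    set σ := Tuple.sort (subVec a b ((Tab a b)^[k] x))
    refine ⟨(subVecMatrix ℤ ha * M).submatrix σ id, ?_, ?_⟩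
    · simp [det_permute, det_mul, det_subVecMatrix, hM]
    · have hmap : (subVecMatrix ℤ ha * M).map (Int.cast : ℤ → ℝ) =
          (subVecMatrix ℤ ha).map Int.cast * M.map Int.cast :=
        Matrix.map_mul (f := Int.castRingHom ℝ)
      ext i
      rw [← submatrix_map, hmap, subVecMatrix_map_intCast, Function.iterate_succ_apply']
      change Tab a b _ i = ((subVecMatrix ℝ ha * M.map Int.cast) *ᵥ x) (σ i)
      rw [← mulVec_mulVec, ← hk, ← subVec_eq_mulVec]
      rfl

theorem Tab_iterate_mem_Lambda {x : Fin (a + b) → ℝ} (hx : x ∈ Lambda (a + b)) (k : ℕ) :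
    (Tab a b)^[k] x ∈ Lambda (a + b) :=
  Set.MapsTo.iterate (fun _ => Tab_mem_Lambda) k hx

theorem Tab_iterate_succ_le {x : Fin (a + b) → ℝ} (hx : x ∈ Lambda (a + b)) (k : ℕ) :
    (Tab a b)^[k + 1] x ≤ (Tab a b)^[k] x := by
  rw [Function.iterate_succ_apply']
  exact Tab_le (Tab_iterate_mem_Lambda hx k)

theorem Tab_iterate_pos (ha : 1 ≤ a) {x : Fin (a + b) → ℝ} (hx : x ∈ Lambda (a + b))
    (hgen : ∀ M : Matrix (Fin (a + b)) (Fin (a + b)) ℤ, M.det ≠ 0 →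
      ∀ i, (M.map (Int.cast : ℤ → ℝ) *ᵥ x) i ≠ 0) (k : ℕ) (i : Fin (a + b)) :
    0 < (Tab a b)^[k] x i := by
  obtain ⟨M, hM, hk⟩ := exists_intMatrix_Tab_iterate_eq_mulVec ha x k
  exact ((Tab_iterate_mem_Lambda hx k).1 i).lt_of_ne (hk ▸ hgen M hM i).symm

theorem tendsto_Tab_iterate_pivot (ha : 1 ≤ a) (hb : 1 ≤ b) {x : Fin (a + b) → ℝ}
    (hx : x ∈ Lambda (a + b)) :
    Tendsto (fun k => (Tab a b)^[k] x (pivot ha)) atTop (𝓝 0) := by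
  have hb' : (1 : ℝ) ≤ b := by exact_mod_cast hb
  refine tendsto_zero_of_add_le (S := fun k => ∑ i, (Tab a b)^[k] x i)
    (fun k => (Tab_iterate_mem_Lambda hx k).1 _)
    (fun k => sum_nonneg fun i _ => (Tab_iterate_mem_Lambda hx k).1 i) fun k => ?_
  have hk := (Tab_iterate_mem_Lambda hx k).1 (pivot ha)
  simp only [Function.iterate_succ_apply', sum_Tab ha]
  nlinarith

theorem tendsto_Tab_iterate_of_val_eq (ha : 1 ≤ a) {x : Fin (a + b) → ℝ}
    (hx : x ∈ Lambda (a + b)) (hpos : ∀ k, 0 < (Tab a b)^[k] x (pivot ha))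
    (hpivot : Tendsto (fun k => (Tab a b)^[k] x (pivot ha)) atTop (𝓝 0))
    {j : Fin (a + b)} (hj : (j : ℕ) = a) :
    Tendsto (fun k => (Tab a b)^[k] x j) atTop (𝓝 0) := by
  set y := fun k => (Tab a b)^[k] x
  have hbdd : BddBelow (Set.range fun k => y k j) :=
    ⟨0, Set.forall_mem_range.2 fun k => (Tab_iterate_mem_Lambda hx k).1 j⟩
  have hlim := tendsto_atTop_ciInf
    (antitone_nat_of_succ_le fun k => Tab_iterate_succ_le hx k j) hbdd
  rcases (le_ciInf fun k => (Tab_iterate_mem_Lambda hx k).1 j : 0 ≤ ⨅ k, y k j).eq_or_lt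
    with hc | hc
  · rwa [← hc] at hlim
  exfalso
  obtain ⟨K, hK⟩ := eventually_atTop.1 (hpivot.eventually (gt_mem_nhds (half_pos hc)))
  -- From `K` on, `x_a` is below half the limit of `x_{a+1}`, so every `x_j - x_a` (`j > a`)
  -- exceeds `x_a` and `T` leaves `x_a` in place.
  have hfrozen : ∀ k ≥ K, y k (pivot ha) = y K (pivot ha) := by
    refine Nat.le_induction rfl fun k hk ih => ?_
    rw [← ih]
    show (Tab a b)^[k + 1] x (pivot ha) = _
    rw [Function.iterate_succ_apply']
    refine Tab_apply_pivot ha (Tab_iterate_mem_Lambda hx k) hj ?_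
    linarith [hK k hk, ciInf_le hbdd k]
  have hconst : Tendsto (fun _ : ℕ => y K (pivot ha)) atTop (𝓝 0) :=
    hpivot.congr' (eventually_atTop.2 ⟨K, hfrozen⟩)
  exact (hpos K).ne' (tendsto_const_nhds_iff.1 hconst)

end Tab

/-- for `a, b ≥ 1`, for a.e. `x ∈ Λ^{a+b}` each of the first
`a+1` coordinates (1-based `i ≤ a+1`) of the iterates tends to `0`. -/
theorem statement9 (a b : ℕ) (ha : 1 ≤ a) (hb : 1 ≤ b) :
    ∀ᵐ x : Fin (a + b) → ℝ, x ∈ Lambda (a + b) →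
      ∀ i : Fin (a + b), (i : ℕ) < a + 1 →
        Tendsto (fun k => (Tab a b)^[k] x i) atTop (𝓝 0) := by
  filter_upwards [ae_forall_intMatrix_mulVec_ne_zero (Fin (a + b))] with x hgen hx i hi
  have hpivot := tendsto_Tab_iterate_pivot ha hb hx
  rcases lt_or_eq_of_le (Nat.lt_succ_iff.1 hi) with hia | hia
  · refine squeeze_zero (fun k => (Tab_iterate_mem_Lambda hx k).1 i) (fun k => ?_) hpivot
    exact (Tab_iterate_mem_Lambda hx k).2 (Fin.le_iff_val_le_val.2 (by simp [pivot]; omega))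
  · exact tendsto_Tab_iterate_of_val_eq ha hx (fun k => Tab_iterate_pos ha hx hgen k _) hpivot hia
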